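/- arXiv:2511.04878 — 2 statements merged into one kernel-verified Lean document; each statement's English description precedes it below -/
import Mathlib

section
/- Let a, b > 0, c > 0, α > 0 be real numbers with σ := c - a - b + α > 0, and let k ≥ 0 be real. Then ∫₀¹ t^{c-1}(1-t)^{α+k-1} ₂F₁(a,b;c;t) dt = Γ(c) Γ(α+k) Γ(σ+k) / (Γ(σ+a+k) Γ(σ+b+k)). (This is the monomial case f(z) = z^k of the integral transform lemma; the integral converges since the integrand is O((1-t)^{σ+k-1}) near t = 1.) -/
open MeasureTheory ENNReal NNReal

/-- Pochhammer symbol `(a)_k = Γ(a+k)/Γ(a)`. -/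
noncomputable def poch (a : ℝ) (k : ℕ) : ℝ := Real.Gamma (a + k) / Real.Gamma a

/-- Gauss hypergeometric function `₂F₁(a,b;c;t)`, as a sum of its series. -/
noncomputable def hyp2F1 (a b c t : ℝ) : ℝ :=
  ∑' k : ℕ, (poch a k * poch b k) / (poch c k * (Nat.factorial k)) * t ^ k

/-- `S_pq(t)`. -/
noncomputable def Spq (n p q : ℕ) (t : ℝ) : ℝ :=
  (Real.Gamma (n + p) * Real.Gamma (n + q)) / (Real.Gamma n * Real.Gamma ((n : ℝ) + p + q)) *
    hyp2F1 p q ((p : ℝ) + q + n) t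

/-- `c_pq(s)`. -/
noncomputable def cpq (n p q : ℕ) (s : ℝ) : ℝ :=
  poch (s + 1) n / Real.Gamma n *
    ∫ t in Set.Ioo (0:ℝ) 1, t ^ ((p : ℝ) + q + n - 1) * (1 - t) ^ s * (Spq n p q t) ^ 2

/-!
Expanding `₂F₁(a,b;c;t)` and integrating termwise against the Beta kernel turns the integral
into `B(c,s) · ₂F₁(a,b;c+s;1)` with `s = α + k`, because
`∫₀¹ t^{c+n-1}(1-t)^{s-1} dt = B(c,s) (c)_n/(c+s)_n`. Gauss's summation
`₂F₁(a,b;d;1) = Γ(d)Γ(d-a-b)/(Γ(d-a)Γ(d-b))` for `d > a + b` comes from the same computation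
run backwards: expanding `(1-t)^{-a}` binomially,
`B(b,d-a-b) = ∫₀¹ t^{b-1}(1-t)^{d-b-1}(1-t)^{-a} dt = B(b,d-b) · ₂F₁(a,b;d;1)`.
All terms are nonnegative, so termwise integration is monotone convergence; in the Gauss step
the convergence of the series at `t = 1` is read off from the integrability of the left side.
-/

open Set

lemma poch_eq_ascPochhammer_eval {a : ℝ} (ha : 0 < a) (n : ℕ) :
    poch a n = (ascPochhammer ℝ n).eval a := by
  induction n with
  | zero => simp [poch, (Real.Gamma_pos_of_pos ha).ne']
  | succ n ih =>
    rw [ascPochhammer_succ_eval, ← ih, poch, poch, Nat.cast_succ, ← add_assoc,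
      Real.Gamma_add_one (by positivity)]
    ring

lemma poch_pos {a : ℝ} (ha : 0 < a) (n : ℕ) : 0 < poch a n :=
  poch_eq_ascPochhammer_eval ha n ▸ ascPochhammer_pos n a ha

lemma mem_eball_one_of_abs_lt_one {t : ℝ} (ht : |t| < 1) : t ∈ Metric.eball (0 : ℝ) 1 := by
  simpa [Metric.mem_eball, edist_zero_right, enorm_eq_nnnorm, ← NNReal.coe_lt_one] using ht

lemma hasSum_poch_div_factorial_mul_pow {a t : ℝ} (ha : 0 < a) (ht : |t| < 1) :
    HasSum (fun n : ℕ => poch a n / n.factorial * t ^ n) ((1 - t) ^ a)⁻¹ := by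
  have h := (Real.one_div_one_sub_rpow_hasFPowerSeriesOnBall_zero a).hasSum
    (mem_eball_one_of_abs_lt_one ht)
  simp only [FormalMultilinearSeries.ofScalars_apply_eq, zero_add, one_div, smul_eq_mul] at h
  have hchoose (n : ℕ) : Ring.choose (a + n - 1) n = poch a n / n.factorial := by
    rw [← Ring.multichoose_eq, poch_eq_ascPochhammer_eval ha,
      ← Polynomial.ascPochhammer_smeval_eq_eval,
      ← Ring.factorial_nsmul_multichoose_eq_ascPochhammer, nsmul_eq_mul]
    field_simp
  simpa only [hchoose] using h

lemma hasSum_hyp2F1 {a b c t : ℝ} (ha : 0 < a) (hb : 0 < b) (hc : 0 < c) (ht : |t| < 1) :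
    HasSum (fun n : ℕ => poch a n * poch b n / (poch c n * n.factorial) * t ^ n)
      (hyp2F1 a b c t) := by
  have hne : ∀ k : ℕ, (k : ℝ) ≠ -a ∧ (k : ℝ) ≠ -b ∧ (k : ℝ) ≠ -c := fun k => by
    have := k.cast_nonneg (α := ℝ)
    exact ⟨by linarith, by linarith, by linarith⟩
  have h := (ordinaryHypergeometricSeries ℝ a b c).summable (x := t) (by
    rw [ordinaryHypergeometricSeries_radius_eq_one ℝ a b c hne]
    exact mem_eball_one_of_abs_lt_one ht)
  simp only [ordinaryHypergeometricSeries_apply_eq, smul_eq_mul, ← poch_eq_ascPochhammer_eval ha,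
    ← poch_eq_ascPochhammer_eval hb, ← poch_eq_ascPochhammer_eval hc] at h
  have hterm (n : ℕ) : (n.factorial : ℝ)⁻¹ * poch a n * poch b n * (poch c n)⁻¹ * t ^ n =
      poch a n * poch b n / (poch c n * n.factorial) * t ^ n := by
    ring
  simp only [hterm] at h
  exact h.hasSum

lemma summable_integral_of_hasSum_of_nonneg {α : Type*} [MeasurableSpace α] {μ : Measure α}
    {g : ℕ → α → ℝ} {G : α → ℝ} (hg : ∀ n, 0 ≤ᵐ[μ] g n) (hgi : ∀ n, Integrable (g n) μ)
    (hG : ∀ᵐ x ∂μ, HasSum (fun n => g n x) (G x)) (hGi : Integrable G μ) :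
    Summable fun n => ∫ x, g n x ∂μ := by
  refine summable_of_sum_range_le (c := ∫ x, G x ∂μ) (fun n => integral_nonneg_of_ae (hg n))
    fun N => ?_
  rw [← integral_finsetSum _ fun n _ => hgi n]
  refine integral_mono_ae (integrable_finsetSum _ fun n _ => hgi n) hGi ?_
  filter_upwards [hG, ae_all_iff.2 hg] with x hx hx0
  exact sum_le_hasSum _ (fun n _ => hx0 n) hx

lemma Complex.ofReal_rpow_mul_one_sub_rpow {u v t : ℝ} (ht : t ∈ Icc (0 : ℝ) 1) :
    ((t ^ (u - 1) * (1 - t) ^ (v - 1) : ℝ) : ℂ) =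
      (t : ℂ) ^ ((u : ℂ) - 1) * (1 - (t : ℂ)) ^ ((v : ℂ) - 1) := by
  rw [Complex.ofReal_mul, Complex.ofReal_cpow ht.1, Complex.ofReal_cpow (by linarith [ht.2])]
  push_cast
  ring_nf

lemma integrableOn_rpow_mul_one_sub_rpow {u v : ℝ} (hu : 0 < u) (hv : 0 < v) :
    IntegrableOn (fun t : ℝ => t ^ (u - 1) * (1 - t) ^ (v - 1)) (Ioo 0 1) := by
  have h : IntegrableOn (fun t : ℝ => ((t : ℂ) ^ ((u : ℂ) - 1) * (1 - (t : ℂ)) ^ ((v : ℂ) - 1)).re)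
      (Ioc 0 1) :=
    (Complex.betaIntegral_convergent (by simpa using hu) (by simpa using hv)).1.re
  refine (h.mono_set Ioo_subset_Ioc_self).congr_fun (fun t ht => ?_) measurableSet_Ioo
  simp only [← Complex.ofReal_rpow_mul_one_sub_rpow (Ioo_subset_Icc_self ht), Complex.ofReal_re]

lemma integral_rpow_mul_one_sub_rpow {u v : ℝ} (hu : 0 < u) (hv : 0 < v) :
    ∫ t in Ioo (0 : ℝ) 1, t ^ (u - 1) * (1 - t) ^ (v - 1) =
      Real.Gamma u * Real.Gamma v / Real.Gamma (u + v) := by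
  have h := Complex.Gamma_mul_Gamma_eq_betaIntegral (s := u) (t := v) (by simpa using hu)
    (by simpa using hv)
  rw [Complex.betaIntegral, intervalIntegral.integral_of_le zero_le_one,
    integral_Ioc_eq_integral_Ioo, ← setIntegral_congr_fun measurableSet_Ioo
      (fun t ht => Complex.ofReal_rpow_mul_one_sub_rpow (Ioo_subset_Icc_self ht)),
    integral_complex_ofReal, ← Complex.ofReal_add, Complex.Gamma_ofReal, Complex.Gamma_ofReal,
    Complex.Gamma_ofReal, ← Complex.ofReal_mul, ← Complex.ofReal_mul] at h
  rw [eq_div_iff (Real.Gamma_pos_of_pos (add_pos hu hv)).ne', mul_comm]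
  exact_mod_cast h.symm

lemma Gamma_add_natCast_eq_mul_poch {a : ℝ} (ha : 0 < a) (n : ℕ) :
    Real.Gamma (a + n) = Real.Gamma a * poch a n := by
  rw [poch, mul_div_cancel₀ _ (Real.Gamma_pos_of_pos ha).ne']

section BetaMoments

variable {u v : ℝ}

lemma rpow_mul_one_sub_rpow_mul_monomial {t : ℝ} (ht : 0 < t) (a : ℝ) (n : ℕ) :
    t ^ (u - 1) * (1 - t) ^ (v - 1) * (a * t ^ n) = a * (t ^ (u + n - 1) * (1 - t) ^ (v - 1)) := by
  rw [show u + n - 1 = u - 1 + n by ring, Real.rpow_add ht, Real.rpow_natCast]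
  ring

lemma rpow_mul_one_sub_rpow_mul_monomial_nonneg {t a : ℝ} (ht : t ∈ Ioo (0 : ℝ) 1) (ha : 0 ≤ a)
    (n : ℕ) : 0 ≤ t ^ (u - 1) * (1 - t) ^ (v - 1) * (a * t ^ n) := by
  have := ht.1
  have : 0 < 1 - t := sub_pos.2 ht.2
  positivity

lemma integrableOn_rpow_mul_one_sub_rpow_mul_monomial (hu : 0 < u) (hv : 0 < v) (a : ℝ)
    (n : ℕ) : IntegrableOn (fun t : ℝ => t ^ (u - 1) * (1 - t) ^ (v - 1) * (a * t ^ n)) (Ioo 0 1) :=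
  IntegrableOn.congr_fun ((integrableOn_rpow_mul_one_sub_rpow (by positivity) hv).const_mul a)
    (fun t ht => (rpow_mul_one_sub_rpow_mul_monomial ht.1 a n).symm) measurableSet_Ioo

lemma integral_rpow_mul_one_sub_rpow_mul_monomial (hu : 0 < u) (hv : 0 < v) (a : ℝ) (n : ℕ) :
    ∫ t in Ioo (0 : ℝ) 1, t ^ (u - 1) * (1 - t) ^ (v - 1) * (a * t ^ n) =
      Real.Gamma u * Real.Gamma v / Real.Gamma (u + v) * (a * (poch u n / poch (u + v) n)) := by
  rw [setIntegral_congr_fun measurableSet_Ioo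
      (fun t ht => rpow_mul_one_sub_rpow_mul_monomial ht.1 a n),
    integral_const_mul, integral_rpow_mul_one_sub_rpow (by positivity) hv,
    show u + n + v = u + v + n by ring, Gamma_add_natCast_eq_mul_poch hu,
    Gamma_add_natCast_eq_mul_poch (add_pos hu hv)]
  ring

variable {c : ℕ → ℝ} {F : ℝ → ℝ}

lemma summable_of_integrableOn_rpow_mul_one_sub_rpow_mul_hasSum (hu : 0 < u) (hv : 0 < v)
    (hc : ∀ n, 0 ≤ c n) (hF : ∀ t ∈ Ioo (0 : ℝ) 1, HasSum (fun n => c n * t ^ n) (F t))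
    (hint : IntegrableOn (fun t => t ^ (u - 1) * (1 - t) ^ (v - 1) * F t) (Ioo 0 1)) :
    Summable fun n => c n * (poch u n / poch (u + v) n) := by
  have hB : Real.Gamma u * Real.Gamma v / Real.Gamma (u + v) ≠ 0 := by
    have := Real.Gamma_pos_of_pos hu
    have := Real.Gamma_pos_of_pos hv
    have := Real.Gamma_pos_of_pos (add_pos hu hv)
    positivity
  have h := summable_integral_of_hasSum_of_nonneg (μ := volume.restrict (Ioo (0 : ℝ) 1))
    (g := fun n t => t ^ (u - 1) * (1 - t) ^ (v - 1) * (c n * t ^ n))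
    (fun n => (ae_restrict_iff' measurableSet_Ioo).2 (ae_of_all _ fun t ht =>
      rpow_mul_one_sub_rpow_mul_monomial_nonneg ht (hc n) n))
    (fun n => integrableOn_rpow_mul_one_sub_rpow_mul_monomial hu hv (c n) n)
    ((ae_restrict_iff' measurableSet_Ioo).2 (ae_of_all _ fun t ht => (hF t ht).mul_left _)) hint
  simp only [integral_rpow_mul_one_sub_rpow_mul_monomial hu hv] at h
  exact (summable_mul_left_iff hB).1 h

lemma integral_rpow_mul_one_sub_rpow_mul_hasSum (hu : 0 < u) (hv : 0 < v)
    (hc : ∀ n, 0 ≤ c n) (hF : ∀ t ∈ Ioo (0 : ℝ) 1, HasSum (fun n => c n * t ^ n) (F t))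
    (hs : Summable fun n => c n * (poch u n / poch (u + v) n)) :
    ∫ t in Ioo (0 : ℝ) 1, t ^ (u - 1) * (1 - t) ^ (v - 1) * F t =
      Real.Gamma u * Real.Gamma v / Real.Gamma (u + v) *
        ∑' n, c n * (poch u n / poch (u + v) n) := by
  have h := hasSum_integral_of_summable_integral_norm (μ := volume.restrict (Ioo (0 : ℝ) 1))
    (F := fun n t => t ^ (u - 1) * (1 - t) ^ (v - 1) * (c n * t ^ n))
    (fun n => integrableOn_rpow_mul_one_sub_rpow_mul_monomial hu hv (c n) n)
    (by
      refine (hs.mul_left (Real.Gamma u * Real.Gamma v / Real.Gamma (u + v))).congr fun n => ?_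
      rw [← integral_rpow_mul_one_sub_rpow_mul_monomial hu hv, setIntegral_congr_fun
        measurableSet_Ioo fun t ht => Real.norm_of_nonneg
          (rpow_mul_one_sub_rpow_mul_monomial_nonneg ht (hc n) n)])
  simp only [integral_rpow_mul_one_sub_rpow_mul_monomial hu hv] at h
  rw [← hs.tsum_mul_left, h.tsum_eq]
  exact setIntegral_congr_fun measurableSet_Ioo fun t ht => ((hF t ht).mul_left _).tsum_eq.symm

end BetaMoments

theorem hasSum_gauss {a b c : ℝ} (ha : 0 < a) (hb : 0 < b) (hab : a + b < c) :
    HasSum (fun n : ℕ => poch a n * poch b n / (poch c n * n.factorial))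
      (Real.Gamma c * Real.Gamma (c - a - b) / (Real.Gamma (c - a) * Real.Gamma (c - b))) := by
  have hcb : 0 < c - b := by linarith
  have hcab : 0 < c - a - b := by linarith
  have hF (t : ℝ) (ht : t ∈ Ioo (0 : ℝ) 1) :
      HasSum (fun n : ℕ => poch a n / n.factorial * t ^ n) ((1 - t) ^ a)⁻¹ :=
    hasSum_poch_div_factorial_mul_pow ha (abs_lt.2 ⟨by linarith [ht.1], ht.2⟩)
  have hkernel : EqOn (fun t : ℝ => t ^ (b - 1) * (1 - t) ^ (c - b - 1) * ((1 - t) ^ a)⁻¹)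
      (fun t => t ^ (b - 1) * (1 - t) ^ (c - a - b - 1)) (Ioo 0 1) := fun t ht => by
    dsimp only
    rw [mul_assoc, ← Real.rpow_neg (sub_pos.2 ht.2).le, ← Real.rpow_add (sub_pos.2 ht.2)]
    ring_nf
  have hcoeff (n : ℕ) : 0 ≤ poch a n / n.factorial :=
    div_nonneg (poch_pos ha n).le (Nat.cast_nonneg _)
  have hs := summable_of_integrableOn_rpow_mul_one_sub_rpow_mul_hasSum hb hcb hcoeff hF
    ((integrableOn_rpow_mul_one_sub_rpow hb hcab).congr_fun hkernel.symm measurableSet_Ioo)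
  have h := integral_rpow_mul_one_sub_rpow_mul_hasSum hb hcb hcoeff hF hs
  rw [setIntegral_congr_fun measurableSet_Ioo hkernel, integral_rpow_mul_one_sub_rpow hb hcab] at h
  simp only [add_sub_cancel] at hs h
  have hterm : (fun n : ℕ => poch a n / n.factorial * (poch b n / poch c n)) =
      fun n => poch a n * poch b n / (poch c n * n.factorial) := funext fun n => by ring
  rw [hterm] at hs h
  convert hs.hasSum using 1
  have := Real.Gamma_pos_of_pos hb
  have := Real.Gamma_pos_of_pos hcb
  have := Real.Gamma_pos_of_pos (show 0 < c by linarith)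
  field_simp at h ⊢
  linear_combination h

/-- The monomial case of Lemma 3.3:
`∫₀¹ t^{c-1}(1-t)^{α+k-1} ₂F₁(a,b;c;t) dt = Γ(c)Γ(α+k)Γ(σ+k)/(Γ(σ+a+k)Γ(σ+b+k))`,
where `σ = c - a - b + α`. -/
theorem statement2 (a b c α k : ℝ) (ha : 0 < a) (hb : 0 < b) (hc : 0 < c) (hα : 0 < α)
    (hσ : 0 < c - a - b + α) (hk : 0 ≤ k) :
    ∫ t in Set.Ioo (0:ℝ) 1, t ^ (c - 1) * (1 - t) ^ (α + k - 1) * hyp2F1 a b c t =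
      Real.Gamma c * Real.Gamma (α + k) * Real.Gamma ((c - a - b + α) + k) /
        (Real.Gamma ((c - a - b + α) + a + k) * Real.Gamma ((c - a - b + α) + b + k)) := by
  have hs : 0 < α + k := by linarith
  have hcoeff (n : ℕ) : 0 ≤ poch a n * poch b n / (poch c n * n.factorial) := by
    have := poch_pos ha n; have := poch_pos hb n; have := poch_pos hc n
    positivity
  have hterm (n : ℕ) : poch a n * poch b n / (poch c n * n.factorial) *
      (poch c n / poch (c + (α + k)) n) =
        poch a n * poch b n / (poch (c + (α + k)) n * n.factorial) := by
    have := poch_pos hc n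
    field_simp
  have hgauss := hasSum_gauss ha hb (show a + b < c + (α + k) by linarith)
  simp only [← hterm] at hgauss
  rw [integral_rpow_mul_one_sub_rpow_mul_hasSum hc hs hcoeff
    (fun t ht => hasSum_hyp2F1 ha hb hc (abs_lt.2 ⟨by linarith [ht.1], ht.2⟩))
    hgauss.summable, hgauss.tsum_eq]
  have := Real.Gamma_pos_of_pos (add_pos hc hs)
  rw [show c - a - b + α + k = c + (α + k) - a - b by ring,
    show c - a - b + α + a + k = c + (α + k) - b by ring,
    show c - a - b + α + b + k = c + (α + k) - a by ring]
  field_simp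
end

section
/- Let n ≥ 1 and let p, q ≥ 0 be integers. For every p̃ ∈ H̃^{pq} one has □p̃ = (4pq + (2n-2)(p+q)) p̃ as functions on ℂ^n. -/
open MeasureTheory ENNReal NNReal

noncomputable instance (n : ℕ) : MeasurableSpace (EuclideanSpace ℂ (Fin n)) := borel _
instance (n : ℕ) : BorelSpace (EuclideanSpace ℂ (Fin n)) := ⟨rfl⟩
/-- Lebesgue measure on `ℂⁿ`. -/
noncomputable instance (n : ℕ) : MeasureSpace (EuclideanSpace ℂ (Fin n)) :=
  ⟨Measure.map (⇑(PiLp.continuousLinearEquiv 2 ℝ (fun _ : Fin n => ℂ)).symm) volume⟩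

abbrev En (n : ℕ) := EuclideanSpace ℂ (Fin n)

/-- Wirtinger derivative `∂f/∂z_j`. -/
noncomputable def wd (n : ℕ) (j : Fin n) (f : En n → ℂ) (z : En n) : ℂ :=
  (1/2 : ℂ) * (fderiv ℝ f z (EuclideanSpace.single j 1) -
    Complex.I * fderiv ℝ f z (EuclideanSpace.single j Complex.I))

/-- Wirtinger derivative `∂f/∂z̄_j`. -/
noncomputable def wdb (n : ℕ) (j : Fin n) (f : En n → ℂ) (z : En n) : ℂ :=
  (1/2 : ℂ) * (fderiv ℝ f z (EuclideanSpace.single j 1) +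
    Complex.I * fderiv ℝ f z (EuclideanSpace.single j Complex.I))

/-- The complex-tangential field `L_{jk} = z̄_j ∂/∂z_k − z̄_k ∂/∂z_j`. -/
noncomputable def Lop (n : ℕ) (j k : Fin n) (f : En n → ℂ) : En n → ℂ :=
  fun z => (starRingEnd ℂ) (z j) * wd n k f z - (starRingEnd ℂ) (z k) * wd n j f z

/-- The complex-tangential field `L̄_{jk} = z_j ∂/∂z̄_k − z_k ∂/∂z̄_j`. -/
noncomputable def Lbarop (n : ℕ) (j k : Fin n) (f : En n → ℂ) : En n → ℂ :=
  fun z => z j * wdb n k f z - z k * wdb n j f z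

/-- `□ = −Σ_{j,k} (L_{jk}L̄_{jk} + L̄_{jk}L_{jk})`. -/
noncomputable def BoxOp (n : ℕ) (f : En n → ℂ) : En n → ℂ :=
  fun z => -∑ j : Fin n, ∑ k : Fin n, (Lop n j k (Lbarop n j k f) z + Lbarop n j k (Lop n j k f) z)

/-- `f` is `M`-harmonic on the unit ball (of smoothness class `m`):
`Δ̃f = 4(1-|z|²) Σ_{j,k}(δ_{jk} - z_j z̄_k) ∂²f/∂z_j∂z̄_k = 0` on the ball. -/
def MHarm (n : ℕ) (m : ℕ∞) (f : En n → ℂ) : Prop :=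
  ContDiffOn ℝ m f (Metric.ball 0 1) ∧
  ∀ z ∈ Metric.ball (0 : En n) 1,
    (4 : ℂ) * (1 - (‖z‖ : ℂ) ^ 2) *
      ∑ j : Fin n, ∑ k : Fin n,
        ((if j = k then 1 else 0) - z j * (starRingEnd ℂ) (z k)) * wd n j (wdb n k f) z = 0

/-- `‖f‖²_s = ∫_{B_n} |f|² dμ_s` as an extended real. -/
noncomputable def nsqE (n : ℕ) (s : ℝ) (f : En n → ℂ) : ℝ≥0∞ :=
  ∫⁻ z in Metric.ball (0 : En n) 1,
    ENNReal.ofReal (poch (s + 1) n / Real.pi ^ n * (1 - ‖z‖ ^ 2) ^ s * ‖f z‖ ^ 2)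

/-- `‖f‖²_s = ∫_{B_n} |f|² dμ_s` as a real number. -/
noncomputable def normSqS (n : ℕ) (s : ℝ) (f : En n → ℂ) : ℝ :=
  ∫ z in Metric.ball (0 : En n) 1,
    poch (s + 1) n / Real.pi ^ n * (1 - ‖z‖ ^ 2) ^ s * ‖f z‖ ^ 2

/-- The normalized surface measure `σ` on the unit sphere `∂B_n`. -/
noncomputable def sphMeas (n : ℕ) : Measure (Metric.sphere (0 : En n) 1) :=
  ((volume : Measure (En n)).toSphere Set.univ)⁻¹ • (volume : Measure (En n)).toSphere

/-- `‖g‖²_{∂B_n} = ∫_{∂B_n} |g|² dσ`. -/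
noncomputable def normSqSphere (n : ℕ) (g : En n → ℂ) : ℝ :=
  ∫ ζ : Metric.sphere (0 : En n) 1, ‖g (ζ : En n)‖ ^ 2 ∂ sphMeas n

/-- Membership in `H̃^{pq}`: `P` is a polynomial in `z, z̄`, homogeneous of bidegree `(p,q)`,
and harmonic for the Euclidean Laplacian `Δ = 4 Σ_j ∂²/∂z_j∂z̄_j` on `ℝ^{2n}`. -/
def InHtilde (n : ℕ) (p q : ℕ) (P : En n → ℂ) : Prop :=
  (∃ Q : MvPolynomial (Fin n ⊕ Fin n) ℂ,
    (∀ z : En n,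
      P z = MvPolynomial.eval (Sum.elim (fun j => z j) (fun j => (starRingEnd ℂ) (z j))) Q) ∧
    ∀ d ∈ Q.support,
      (∑ j : Fin n, d (Sum.inl j)) = p ∧ (∑ j : Fin n, d (Sum.inr j)) = q) ∧
  ∀ z : En n, ∑ j : Fin n, wd n j (wdb n j P) z = 0

/-! Writing `p̃` as a polynomial `Q` in the independent variables `zⱼ` and `z̄ⱼ`, the Wirtinger
derivatives become formal partial derivatives and `□` becomes a formal second-order operator.
Commuting the derivatives past the coordinates expresses `□Q` through the Euler operators
`E = Σ zⱼ ∂/∂zⱼ`, `Ē = Σ z̄ⱼ ∂/∂z̄ⱼ` and the Laplacian `Σ ∂²/∂zⱼ∂z̄ⱼ`: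
`□ = 2(n - 1)(E + Ē) + 4EĒ - 4|z|² Σ ∂²/∂zⱼ∂z̄ⱼ`. On `H̃^{pq}` the Euler operators act by `p`
and `q` and the Laplacian vanishes. -/

open MvPolynomial ComplexConjugate

namespace MvPolynomial

theorem hasFDerivAt_eval {𝕜 E 𝔸 σ : Type*} [NontriviallyNormedField 𝕜]
    [NormedAddCommGroup E] [NormedSpace 𝕜 E] [NormedCommRing 𝔸] [NormedAlgebra 𝕜 𝔸] [Fintype σ]
    (ℓ : σ → E →L[𝕜] 𝔸) (Q : MvPolynomial σ 𝔸) (x : E) :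
    HasFDerivAt (fun y => eval (fun i => ℓ i y) Q)
      (∑ i, eval (fun i => ℓ i x) (pderiv i Q) • ℓ i) x := by
  classical
  induction Q using MvPolynomial.induction_on with
  | C a =>
    simp only [eval_C]
    refine (hasFDerivAt_const (𝕜 := 𝕜) a x).congr_fderiv ?_
    ext v; simp
  | add P R hP hR =>
    simp only [map_add]
    refine (hP.add hR).congr_fderiv ?_
    ext v; simp [add_mul, Finset.sum_add_distrib]
  | mul_X P i hP =>
    simp only [map_mul, eval_X]
    refine (hP.mul (ℓ i).hasFDerivAt).congr_fderiv ?_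
    ext v
    simp [pderiv_X, Pi.single_apply, apply_ite, ite_mul, add_mul, Finset.sum_add_distrib,
      Finset.mul_sum, mul_assoc]

variable {R σ ι : Type*} [CommRing R]

theorem pderiv_pderiv_comm (i j : σ) (f : MvPolynomial σ R) :
    pderiv i (pderiv j f) = pderiv j (pderiv i f) := by
  have h : ⁅pderiv i, pderiv j⁆ = (0 : Derivation R (MvPolynomial σ R) (MvPolynomial σ R)) :=
    derivation_ext fun k => by
      classical
      rw [Derivation.commutator_apply]
      simp [pderiv_X, Pi.single_apply, apply_ite (pderiv _)]
  rw [← sub_eq_zero, ← Derivation.commutator_apply, h, Derivation.zero_apply]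

noncomputable def tangentialOp (u v : ι → σ) (j k : ι) (Q : MvPolynomial σ R) :
    MvPolynomial σ R :=
  X (v j) * pderiv (u k) Q - X (v k) * pderiv (u j) Q

variable [Fintype ι]

noncomputable def eulerOp (u : ι → σ) (Q : MvPolynomial σ R) : MvPolynomial σ R :=
  ∑ j, X (u j) * pderiv (u j) Q

noncomputable def boxOp (u v : ι → σ) (Q : MvPolynomial σ R) : MvPolynomial σ R :=
  -∑ j, ∑ k, (tangentialOp u v j k (tangentialOp v u j k Q) +
    tangentialOp v u j k (tangentialOp u v j k Q))

theorem eulerOp_nsmul (u : ι → σ) (p : ℕ) (Q : MvPolynomial σ R) :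
    eulerOp u (p • Q) = p • eulerOp u Q := by
  simp [eulerOp, Finset.smul_sum, mul_left_comm]

theorem eulerOp_eq_nsmul (u : ι → σ) {Q : MvPolynomial σ R} {p : ℕ}
    (h : ∀ d ∈ Q.support, ∑ j, d (u j) = p) : eulerOp u Q = p • Q := by
  unfold eulerOp
  conv_lhs => rw [Q.as_sum]
  simp only [map_sum, Finset.mul_sum, X_mul_pderiv_monomial]
  rw [Finset.sum_comm]
  conv_rhs => rw [Q.as_sum, Finset.smul_sum]
  refine Finset.sum_congr rfl fun d hd => ?_
  rw [← Finset.sum_smul, h d hd]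

variable {u v : ι → σ}

theorem sum_tangentialOp_tangentialOp (hu : u.Injective) (huv : ∀ a b, u a ≠ v b)
    (Q : MvPolynomial σ R) :
    ∑ j, ∑ k, tangentialOp u v j k (tangentialOp v u j k Q) =
      2 • (eulerOp v Q - Fintype.card ι • eulerOp v Q - eulerOp v (eulerOp u Q) +
        (∑ j, X (u j) * X (v j)) * ∑ k, pderiv (u k) (pderiv (v k) Q)) := by
  set S := fun j k => X (v j) * pderiv (u k) (X (u j) * pderiv (v k) Q)
  set S' := fun j k => X (v j) * pderiv (u k) (X (u k) * pderiv (v j) Q)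
  have expand : ∀ j k, tangentialOp u v j k (tangentialOp v u j k Q) =
      S j k - S' j k - S' k j + S k j := by
    intro j k
    simp only [S, S', tangentialOp, map_sub]
    ring
  have sum_S : ∑ j, ∑ k, S j k =
      eulerOp v Q + (∑ j, X (u j) * X (v j)) * ∑ k, pderiv (u k) (pderiv (v k) Q) := by
    classical
    simp only [S, eulerOp, pderiv_mul, pderiv_X, Pi.single_apply, hu.eq_iff, mul_add,
      Finset.sum_add_distrib, ite_mul, one_mul, zero_mul, mul_ite, mul_zero, Finset.sum_ite_eq,
      Finset.mem_univ, if_true, Finset.sum_mul_sum, ← mul_assoc, mul_comm (X (v _)) (X (u _))]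
  have sum_S' : ∑ j, ∑ k, S' j k =
      Fintype.card ι • eulerOp v Q + eulerOp v (eulerOp u Q) := by
    simp [S', eulerOp, pderiv_X_of_ne (huv _ _), mul_add, Finset.sum_add_distrib,
      Finset.mul_sum, pderiv_pderiv_comm (v _) (u _)]
    exact add_comm _ _
  simp only [expand, Finset.sum_add_distrib, Finset.sum_sub_distrib]
  -- reindexing `j ↔ k` pairs up the four terms
  rw [Finset.sum_comm (f := fun j k => S' k j), Finset.sum_comm (f := fun j k => S k j),
    sum_S, sum_S']
  abel

theorem boxOp_eq (hu : u.Injective) (hv : v.Injective) (huv : ∀ a b, u a ≠ v b)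
    {Q : MvPolynomial σ R} {p q : ℕ} (hp : eulerOp u Q = p • Q) (hq : eulerOp v Q = q • Q) :
    boxOp u v Q = (4 * p * q + (2 * Fintype.card ι - 2) * (p + q) : R) • Q -
      4 • ((∑ j, X (u j) * X (v j)) * ∑ k, pderiv (u k) (pderiv (v k) Q)) := by
  simp only [boxOp, Finset.sum_add_distrib]
  rw [sum_tangentialOp_tangentialOp hu huv,
    sum_tangentialOp_tangentialOp hv fun a b => (huv b a).symm,
    hp, hq, eulerOp_nsmul, eulerOp_nsmul, hp, hq]
  simp only [mul_comm (X (v _)), pderiv_pderiv_comm (v _) (u _)]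
  module

end MvPolynomial

noncomputable def zConjCoord (n : ℕ) : Fin n ⊕ Fin n → En n →L[ℝ] ℂ :=
  Sum.elim (fun j => (EuclideanSpace.proj j : En n →L[ℂ] ℂ).restrictScalars ℝ)
    (fun j => Complex.conjCLE.toContinuousLinearMap ∘L
      (EuclideanSpace.proj j : En n →L[ℂ] ℂ).restrictScalars ℝ)

/-- The variable `.inl j` of `Q` is evaluated at `zⱼ` and `.inr j` at `z̄ⱼ`. -/
noncomputable def evalZConj (n : ℕ) (Q : MvPolynomial (Fin n ⊕ Fin n) ℂ) (z : En n) : ℂ :=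
  eval (Sum.elim (fun j => z j) (fun j => conj (z j))) Q

theorem evalZConj_eq_eval_zConjCoord (n : ℕ) (Q : MvPolynomial (Fin n ⊕ Fin n) ℂ) :
    evalZConj n Q = fun z => eval (fun i => zConjCoord n i z) Q := by
  funext z
  refine congrArg (fun f => eval f Q) ?_
  funext i
  rcases i with j | j <;> simp [zConjCoord]

theorem hasFDerivAt_evalZConj (n : ℕ) (Q : MvPolynomial (Fin n ⊕ Fin n) ℂ) (z : En n) :
    HasFDerivAt (evalZConj n Q) (∑ i, evalZConj n (pderiv i Q) z • zConjCoord n i) z := by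
  simpa only [evalZConj_eq_eval_zConjCoord] using hasFDerivAt_eval (zConjCoord n) Q z

theorem wd_evalZConj (n : ℕ) (j : Fin n) (Q : MvPolynomial (Fin n ⊕ Fin n) ℂ) :
    wd n j (evalZConj n Q) = evalZConj n (pderiv (.inl j) Q) := by
  ext z
  rw [wd, (hasFDerivAt_evalZConj n Q z).fderiv]
  simp [Fintype.sum_sum_type, zConjCoord, apply_ite conj]
  linear_combination (evalZConj n (pderiv (.inr j) Q) z - evalZConj n (pderiv (.inl j) Q) z) / 2 *
    Complex.I_mul_I

theorem wdb_evalZConj (n : ℕ) (j : Fin n) (Q : MvPolynomial (Fin n ⊕ Fin n) ℂ) :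
    wdb n j (evalZConj n Q) = evalZConj n (pderiv (.inr j) Q) := by
  ext z
  rw [wdb, (hasFDerivAt_evalZConj n Q z).fderiv]
  simp [Fintype.sum_sum_type, zConjCoord, apply_ite conj]
  linear_combination (evalZConj n (pderiv (.inl j) Q) z - evalZConj n (pderiv (.inr j) Q) z) / 2 *
    Complex.I_mul_I

theorem Lop_evalZConj (n : ℕ) (j k : Fin n) (Q : MvPolynomial (Fin n ⊕ Fin n) ℂ) :
    Lop n j k (evalZConj n Q) = evalZConj n (tangentialOp .inl .inr j k Q) := by
  ext z
  simp [Lop, tangentialOp, wd_evalZConj, evalZConj]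

theorem Lbarop_evalZConj (n : ℕ) (j k : Fin n) (Q : MvPolynomial (Fin n ⊕ Fin n) ℂ) :
    Lbarop n j k (evalZConj n Q) = evalZConj n (tangentialOp .inr .inl j k Q) := by
  ext z
  simp [Lbarop, tangentialOp, wdb_evalZConj, evalZConj]

theorem BoxOp_evalZConj (n : ℕ) (Q : MvPolynomial (Fin n ⊕ Fin n) ℂ) :
    BoxOp n (evalZConj n Q) = evalZConj n (boxOp .inl .inr Q) := by
  ext z
  simp [BoxOp, boxOp, Lop_evalZConj, Lbarop_evalZConj, evalZConj]

theorem statement17_general (n p q : ℕ) (P : En n → ℂ) (hP : InHtilde n p q P) :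
    ∀ z : En n, BoxOp n P z = (4 * (p : ℂ) * q + (2 * (n : ℂ) - 2) * ((p : ℂ) + q)) * P z := by
  obtain ⟨⟨Q, hPQ, hdeg⟩, harmonic⟩ := hP
  obtain rfl : P = evalZConj n Q := funext hPQ
  have hp := eulerOp_eq_nsmul Sum.inl fun d hd => (hdeg d hd).1
  have hq := eulerOp_eq_nsmul Sum.inr fun d hd => (hdeg d hd).2
  intro z
  have laplacian : evalZConj n (∑ k, pderiv (.inl k) (pderiv (.inr k) Q)) z = 0 := by
    simpa [wd_evalZConj, wdb_evalZConj, evalZConj] using harmonic z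
  rw [BoxOp_evalZConj,
    boxOp_eq Sum.inl_injective Sum.inr_injective (fun _ _ => Sum.inl_ne_inr) hp hq]
  simp only [evalZConj, map_sum] at laplacian
  simp [evalZConj, laplacian]

/-- `□p̃ = (4pq + (2n-2)(p+q))·p̃` for `p̃ ∈ H̃^{pq}`. -/
theorem statement17 (n p q : ℕ) (hn : 1 ≤ n) (P : En n → ℂ) (hP : InHtilde n p q P) :
    ∀ z : En n, BoxOp n P z = (4 * (p : ℂ) * q + (2 * (n : ℂ) - 2) * ((p : ℂ) + q)) * P z :=
  statement17_general n p q P hP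
end
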